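/- arXiv:2604.23650 — 2 statements merged into one kernel-verified Lean document; each statement's English description precedes it below -/
import Mathlib

section
/- Suppose P is symmetric with P ≥ Iₙ (i.e., P − Iₙ is positive semidefinite) and a matrix F ∈ ℝ^{n×n} satisfies F P Fᵀ − P + Iₙ ≤ 0 (negative semidefinite). Then the spectral radius of F is strictly less than 1. -/
/-!
If `Fᴴ v = μ̄ v` with `v ≠ 0`, then `v* (F P Fᴴ) v = |μ|² v* P v`, so the Lyapunov inequality
evaluated at `v` reads `(1 - |μ|²) v* P v ≥ |v|² > 0`. Since `v* P v ≥ 0`, this forces `|μ| < 1`.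
The real hypotheses are transported to `ℂ` through the factorisation `M = Bᴴ B` of a positive
semidefinite real matrix.
-/

open Matrix

open scoped ComplexOrder

namespace Matrix

variable {n 𝕜 : Type*} [Fintype n] [RCLike 𝕜]

theorem PosSemidef.map_ofReal {M : Matrix n n ℝ} (hM : M.PosSemidef) :
    (M.map ((↑) : ℝ → 𝕜)).PosSemidef := by
  classical
  obtain ⟨B, rfl⟩ : ∃ B : Matrix n n ℝ, M = Bᴴ * B := by
    open scoped MatrixOrder in
    exact ⟨CFC.sqrt M, by rw [← star_eq_conjTranspose, (CFC.sqrt_nonneg M).isSelfAdjoint.star_eq,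
      CFC.sqrt_mul_sqrt_self M hM.nonneg]⟩
  rw [Matrix.map_mul, conjTranspose_map _ fun _ => by simp]
  exact posSemidef_conjTranspose_mul_self _

theorem exists_conjTranspose_mulVec_eq_star_smul [DecidableEq n] {A : Matrix n n 𝕜}
    {μ : 𝕜} (hμ : μ ∈ spectrum 𝕜 A) : ∃ v ≠ 0, Aᴴ *ᵥ v = star μ • v := by
  have h : star μ ∈ spectrum 𝕜 Aᴴ := by
    rw [← star_eq_conjTranspose, spectrum.map_star]
    exact Set.star_mem_star.mpr hμ
  rw [← spectrum_toLin', ← Module.End.hasEigenvalue_iff_mem_spectrum] at h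
  obtain ⟨v, hv⟩ := h.exists_hasEigenvector
  exact ⟨v, hv.2, by simpa using hv.apply_eq_smul⟩

theorem norm_lt_one_of_conjTranspose_mulVec_eq_smul [DecidableEq n] {Q G : Matrix n n 𝕜}
    (hQ : Q.PosSemidef) (hL : (Q - G * Q * Gᴴ - 1).PosSemidef) {c : 𝕜} {v : n → 𝕜}
    (hv : v ≠ 0) (hGv : Gᴴ *ᵥ v = c • v) : ‖c‖ < 1 := by
  set a := star v ⬝ᵥ Q *ᵥ v
  have ha : 0 ≤ a := hQ.dotProduct_mulVec_nonneg v
  have hs : 0 < star v ⬝ᵥ v := dotProduct_star_self_pos_iff.mpr hv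
  have hGQG : star v ⬝ᵥ (G * Q * Gᴴ) *ᵥ v = (‖c‖ ^ 2 : ℝ) * a := by
    rw [← mulVec_mulVec, ← mulVec_mulVec, dotProduct_mulVec, ← conjTranspose_conjTranspose G,
      ← star_mulVec, conjTranspose_conjTranspose, hGv, star_smul, mulVec_smul, smul_dotProduct,
      dotProduct_smul, smul_eq_mul, smul_eq_mul, ← mul_assoc, RCLike.star_def, RCLike.conj_mul]
    norm_cast
  have hsa : star v ⬝ᵥ v ≤ (1 - ‖c‖ ^ 2 : ℝ) * a := by
    have h := hL.dotProduct_mulVec_nonneg v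
    rw [sub_mulVec, sub_mulVec, dotProduct_sub, dotProduct_sub, one_mulVec, hGQG] at h
    rw [RCLike.ofReal_sub, RCLike.ofReal_one, sub_mul, one_mul]
    linear_combination h
  by_contra! hc
  have hc' : ((1 - ‖c‖ ^ 2 : ℝ) : 𝕜) ≤ 0 := by
    rw [RCLike.ofReal_nonpos]
    nlinarith
  exact (hs.trans_le hsa).not_ge (mul_nonpos_of_nonpos_of_nonneg hc' ha)

theorem norm_lt_one_of_mem_spectrum_of_posSemidef [DecidableEq n] {Q G : Matrix n n 𝕜}
    (hQ : Q.PosSemidef) (hL : (Q - G * Q * Gᴴ - 1).PosSemidef) {μ : 𝕜}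
    (hμ : μ ∈ spectrum 𝕜 G) : ‖μ‖ < 1 := by
  obtain ⟨v, hv, hGv⟩ := exists_conjTranspose_mulVec_eq_star_smul hμ
  simpa using norm_lt_one_of_conjTranspose_mulVec_eq_smul hQ hL hv hGv

end Matrix

theorem stmt_8_general (n : ℕ) (P F : Matrix (Fin n) (Fin n) ℝ)
    (hPge : (P - 1).PosSemidef)
    (hlyap : (P - F * P * Fᵀ - 1).PosSemidef) :
    ∀ μ ∈ spectrum ℂ (F.map (Complex.ofReal)), ‖μ‖ < 1 := by
  intro μ hμ
  have hP : P.PosSemidef := by simpa using hPge.add PosSemidef.one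
  have hL : (Complex.ofRealHom.mapMatrix (P - F * P * Fᴴ - 1)).PosSemidef := hlyap.map_ofReal
  rw [map_sub, map_sub, map_mul, map_mul, map_one, RingHom.mapMatrix_apply,
    RingHom.mapMatrix_apply, RingHom.mapMatrix_apply, conjTranspose_map _ fun _ => by simp] at hL
  exact norm_lt_one_of_mem_spectrum_of_posSemidef (hP.map_ofReal (𝕜 := ℂ)) hL hμ

theorem stmt_8 (n : ℕ) (P F : Matrix (Fin n) (Fin n) ℝ) (hP : Pᵀ = P)
    (hPge : (P - 1).PosSemidef)
    (hlyap : (P - F * P * Fᵀ - 1).PosSemidef) :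
    ∀ μ ∈ spectrum ℂ (F.map (Complex.ofReal)), ‖μ‖ < 1 :=
  stmt_8_general n P F hPge hlyap
end

section
/- If (P, Ξ) is feasible for the regularized direct data-driven LQR program (P ≥ Iₙ symmetric, X̄₁Ξ P (X̄₁Ξ)ᵀ − P + Iₙ ≤ 0, Ψ₂Ξ = Iₙ) then K = Ψ₁Ξ and P are feasible for the indirect certainty-equivalence LQR program with the regularized least-squares estimate (Â + B̂K) P (Â + B̂K)ᵀ − P + Iₙ ≤ 0, and the objective values Tr(QP + (Ψ₁Ξ)ᵀR(Ψ₁Ξ)P) and Tr(QP + KᵀRKP) coincide. -/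
open Matrix

lemma mul_split {p q : Type*} {a b : Type*} [Fintype a] [Fintype b]
    (A : Matrix p (a ⊕ b) ℝ) (B : Matrix (a ⊕ b) q ℝ) :
    A * B = A.submatrix id Sum.inl * B.submatrix Sum.inl id
      + A.submatrix id Sum.inr * B.submatrix Sum.inr id := by
  ext i j
  simp [Matrix.mul_apply, Matrix.add_apply, Fintype.sum_sum_type]

lemma submatrix_mul_left {p q r s : Type*} [Fintype q] (f : s → p)
    (A : Matrix p q ℝ) (B : Matrix q r ℝ) :
    (A * B).submatrix f id = A.submatrix f id * B := by
  ext i j; simp [Matrix.mul_apply]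

theorem stmt_13 (n m T : ℕ) (hT : 0 < T) (X₁ : Matrix (Fin n) (Fin T) ℝ)
    (D₀ : Matrix (Fin m ⊕ Fin n) (Fin T) ℝ) (γ : ℝ) (hγ : 0 < γ)
    (Q : Matrix (Fin n) (Fin n) ℝ) (hQ : Q.PosDef)
    (R : Matrix (Fin m) (Fin m) ℝ) (hR : R.PosDef)
    (Ψ : Matrix (Fin m ⊕ Fin n) (Fin m ⊕ Fin n) ℝ)
    (hΨ : Ψ = (T : ℝ)⁻¹ • (D₀ * D₀ᵀ + γ • (1 : Matrix (Fin m ⊕ Fin n) (Fin m ⊕ Fin n) ℝ)))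
    (Ghat : Matrix (Fin n) (Fin m ⊕ Fin n) ℝ)
    (hG : Ghat = X₁ * D₀ᵀ * (D₀ * D₀ᵀ + γ • (1 : Matrix (Fin m ⊕ Fin n) (Fin m ⊕ Fin n) ℝ))⁻¹)
    (Bhat : Matrix (Fin n) (Fin m) ℝ) (hB : Bhat = Ghat.submatrix id Sum.inl)
    (Ahat : Matrix (Fin n) (Fin n) ℝ) (hA : Ahat = Ghat.submatrix id Sum.inr)
    (Xbar₁ : Matrix (Fin n) (Fin m ⊕ Fin n) ℝ) (hX : Xbar₁ = (T : ℝ)⁻¹ • (X₁ * D₀ᵀ))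
    (P : Matrix (Fin n) (Fin n) ℝ) (hPsymm : Pᵀ = P)
    (Ξ : Matrix (Fin m ⊕ Fin n) (Fin n) ℝ)
    (hfeas₁ : (P - 1).PosSemidef)
    (hfeas₂ : (P - (Xbar₁ * Ξ) * P * (Xbar₁ * Ξ)ᵀ - 1).PosSemidef)
    (hfeas₃ : Ψ.submatrix Sum.inr id * Ξ = 1)
    (K : Matrix (Fin m) (Fin n) ℝ) (hK : K = Ψ.submatrix Sum.inl id * Ξ) :
    (P - (Ahat + Bhat * K) * P * (Ahat + Bhat * K)ᵀ - 1).PosSemidef ∧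
      Matrix.trace (Q * P + (Ψ.submatrix Sum.inl id * Ξ)ᵀ * R * (Ψ.submatrix Sum.inl id * Ξ) * P) =
        Matrix.trace (Q * P + Kᵀ * R * K * P) := by
  set M := D₀ * D₀ᵀ + γ • (1 : Matrix (Fin m ⊕ Fin n) (Fin m ⊕ Fin n) ℝ) with hM
  have hMpd : M.PosDef := by
    have h1 : (D₀ * D₀ᵀ).PosSemidef := by
      have := Matrix.posSemidef_self_mul_conjTranspose D₀
      simpa using this
    have h2 : (γ • (1 : Matrix (Fin m ⊕ Fin n) (Fin m ⊕ Fin n) ℝ)).PosDef := by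
      have : γ • (1 : Matrix (Fin m ⊕ Fin n) (Fin m ⊕ Fin n) ℝ)
          = Matrix.diagonal (fun _ => γ) := by
        ext i j
        by_cases h : i = j <;>
          simp [Matrix.one_apply, Matrix.diagonal_apply, h]
      rw [this]
      exact Matrix.posDef_diagonal_iff.mpr fun _ => hγ
    exact Matrix.PosDef.posSemidef_add h1 h2
  have hMinv : M⁻¹ * M = 1 := Matrix.nonsing_inv_mul M hMpd.det_pos.ne'.isUnit
  have hGΨ : Ghat * Ψ = Xbar₁ := by
    rw [hG, hΨ, hX, Matrix.mul_smul, Matrix.mul_assoc (X₁ * D₀ᵀ) _ _, hMinv,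
      Matrix.mul_one]
  have key : Ahat + Bhat * K = Xbar₁ * Ξ := by
    rw [← hGΨ, Matrix.mul_assoc, mul_split Ghat (Ψ * Ξ),
      submatrix_mul_left, submatrix_mul_left, hfeas₃, ← hK, ← hB, ← hA,
      Matrix.mul_one, add_comm]
  constructor
  · rw [key]; exact hfeas₂
  · rw [hK]
end
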